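/- Let w : ℝ → ℝ be a twice continuously differentiable positive function satisfying w'' = (1 + (w')²)/w on ℝ with w(0) = 1 and w'(0) = 0. Then w(x) = cosh(x) for all x. -/

import Mathlib

open Set Real

/-- Uniqueness for the catenary ODE with normalized initial conditions. -/
theorem catenary_ode_uniqueness (w : ℝ → ℝ) (hw : ContDiff ℝ 2 w)
    (hpos : ∀ x, 0 < w x)
    (hode : ∀ x, deriv (deriv w) x = (1 + (deriv w x) ^ 2) / w x)
    (h0 : w 0 = 1) (h0' : deriv w 0 = 0) :
    ∀ x, w x = Real.cosh x := by
  have hne : ∀ x, w x ≠ 0 := fun x => (hpos x).ne'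
  have hw' : ContDiff ℝ ((1:ℕ∞) + 1) w := by
    convert hw using 2
    norm_num
  obtain ⟨hdw, hw1⟩ := contDiff_succ_iff_deriv.mp hw'
  have hdw' : Differentiable ℝ (deriv w) := hw1.2.differentiable (by norm_num)
  -- first integral F = (1 + w'^2) / w^2 is constant
  set F : ℝ → ℝ := fun x => (1 + (deriv w x) ^ 2) / (w x) ^ 2 with hF
  have hFd : ∀ x, HasDerivAt F 0 x := by
    intro x
    have h1 : HasDerivAt (fun x => 1 + (deriv w x) ^ 2)
        (2 * deriv (deriv w) x * deriv w x) x := by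
      have := ((hdw' x).hasDerivAt.fun_pow 2)
      simpa [mul_comm, mul_assoc, mul_left_comm] using (hasDerivAt_const x (1:ℝ)).fun_add this
    have h2 : HasDerivAt (fun x => (w x) ^ 2) (2 * deriv w x * w x) x := by
      simpa [mul_comm, mul_assoc, mul_left_comm] using ((hdw x).hasDerivAt.fun_pow 2)
    have h3 := h1.fun_div h2 (pow_ne_zero 2 (hne x))
    convert h3 using 1
    · rfl
    · rfl
    have hode' : deriv (deriv w) x * w x = 1 + (deriv w x) ^ 2 := by
      rw [hode x, div_mul_cancel₀ _ (hne x)]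
    rw [eq_comm, div_eq_zero_iff]
    left
    have expand : 2 * deriv (deriv w) x * deriv w x * w x ^ 2 -
        (1 + deriv w x ^ 2) * (2 * deriv w x * w x) =
        2 * deriv w x * w x * (deriv (deriv w) x * w x - (1 + deriv w x ^ 2)) := by ring
    rw [expand, hode', sub_self, mul_zero]
  have hFconst : ∀ x, F x = 1 := by
    intro x
    have : F x = F 0 :=
      is_const_of_deriv_eq_zero (fun y => (hFd y).differentiableAt) (fun y => (hFd y).deriv) x 0
    rw [this]
    show (1 + deriv w 0 ^ 2) / (w 0) ^ 2 = 1
    rw [h0, h0']; norm_num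
  have hsq : ∀ x, 1 + (deriv w x) ^ 2 = (w x) ^ 2 := by
    intro x
    have := hFconst x
    rw [hF] at this
    exact (div_eq_one_iff_eq (pow_ne_zero 2 (hne x))).mp this
  have hww : ∀ x, deriv (deriv w) x = w x := by
    intro x
    rw [hode x, hsq x, sq]
    field_simp
  -- ODE system uniqueness
  intro x
  set f : ℝ → ℝ × ℝ := fun t => (w t, deriv w t) with hfdef
  set g : ℝ → ℝ × ℝ := fun t => (Real.cosh t, Real.sinh t) with hgdef
  set v : ℝ → ℝ × ℝ → ℝ × ℝ := fun _ p => (p.2, p.1) with hvdef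
  have hv : ∀ t, LipschitzOnWith 1 (v t) ((fun _ => (univ : Set (ℝ × ℝ))) t) := by
    intro t
    have : LipschitzWith 1 (fun p : ℝ × ℝ => (p.2, p.1)) := by
      simpa using LipschitzWith.prod_snd.prodMk LipschitzWith.prod_fst
    exact this.lipschitzOnWith
  have key : EqOn f g (Ioo (-(|x|+1)) (|x|+1)) := by
    apply ODE_solution_unique_of_mem_Ioo (fun t _ => hv t) (t₀ := 0)
    · constructor <;> [linarith [abs_nonneg x]; linarith [abs_nonneg x]]
    · intro t _
      refine ⟨?_, trivial⟩
      exact ((hdw t).hasDerivAt.prodMk (by simpa [hww t] using (hdw' t).hasDerivAt))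
    · intro t _
      refine ⟨?_, trivial⟩
      exact ((Real.hasDerivAt_cosh t).prodMk (Real.hasDerivAt_sinh t))
    · show (w 0, deriv w 0) = (Real.cosh 0, Real.sinh 0)
      rw [h0, h0', Real.cosh_zero, Real.sinh_zero]
  have hx : x ∈ Ioo (-(|x|+1)) (|x|+1) := by
    constructor
    · linarith [neg_abs_le x]
    · linarith [le_abs_self x]
  have := key hx
  exact congrArg Prod.fst this
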